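/- Let X ⊆ ℝⁿ be a nonempty convex compact set with κ = max_{x∈X} ‖x‖₂ > 0 and C = cone({κ} × X) ⊆ ℝ^{n+1}. Let ω > 0, f ∈ ℝⁿ, x ∈ X, α ≥ 0 and u' = α·(κ, x) ∈ C. Set v = (⟨f, x⟩/κ, −f) ∈ ℝ^{n+1} and u = π_C(u' + ω v). Assume u ≠ 0 and let x⁺ ∈ X and β > 0 be such that u = β·(κ, x⁺). Then ⟨f, x⁺⟩ ≤ ⟨f, x⟩ − (κ / (ω · ‖u‖_∞)) · ‖u − u'‖₂². In particular, if F(·, y) is linear with F(z, y) = ⟨f, z⟩ for all z, this reads F(x⁺, y) − F(x, y) ≤ −(κ / (ω · ‖u‖_∞)) · ‖u − u'‖₂². -/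

import Mathlib

set_option autoImplicit false

open scoped RealInnerProductSpace
open Finset

noncomputable section

/-- The lifted vector `(t, y) ∈ ℝ × ℝⁿ = ℝ^{n+1}`. -/
def pr {n : ℕ} (t : ℝ) (y : EuclideanSpace ℝ (Fin n)) :
    EuclideanSpace ℝ (Fin (n + 1)) :=
  WithLp.toLp 2 (Fin.cons t (fun i => y i) : Fin (n + 1) → ℝ)

/-- The conic hull `cone({κ} × X) = {α • (κ, x) : α ≥ 0, x ∈ X}`. -/
def coneLift {n : ℕ} (κ : ℝ) (X : Set (EuclideanSpace ℝ (Fin n))) :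
    Set (EuclideanSpace ℝ (Fin (n + 1))) :=
  {u | ∃ α : ℝ, 0 ≤ α ∧ ∃ x ∈ X, u = α • pr κ x}

/-- `p` is the Euclidean orthogonal projection of `u` onto the set `S`. -/
def IsProjOn {E : Type*} [NormedAddCommGroup E] [InnerProductSpace ℝ E]
    (u : E) (S : Set E) (p : E) : Prop :=
  p ∈ S ∧ ∀ z ∈ S, dist u p ≤ dist u z

/-- The max-norm `‖u‖_∞ = max_i |u_i|` on `ℝ^{n+1}`. -/
def maxNorm {n : ℕ} (u : EuclideanSpace ℝ (Fin (n + 1))) : ℝ :=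
  Finset.univ.sup' ⟨0, Finset.mem_univ 0⟩ fun i => |u i|

/-! The CBA⁺ direction `v = (⟨f, x⟩/κ, −f)` is orthogonal to the current iterate `u' = α (κ, x)`
and satisfies `⟨v, β (κ, x⁺)⟩ = β (⟨f, x⟩ − ⟨f, x⁺⟩)`. Testing the variational inequality of the
projection `u = π_C(u' + ω v)` against `u' ∈ C` gives `‖u − u'‖² ≤ ω ⟨v, u⟩ = ω β (⟨f, x⟩ − ⟨f, x⁺⟩)`,
and `β κ = u₀ ≤ ‖u‖_∞` turns this into the claimed decrease. -/

section Projection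

variable {E : Type*} [NormedAddCommGroup E] [InnerProductSpace ℝ E] {S : Set E} {w p : E}

theorem IsProjOn.inner_sub_sub_nonpos (hS : Convex ℝ S) (h : IsProjOn w S p) :
    ∀ z ∈ S, ⟪w - p, z - p⟫ ≤ 0 := by
  have : Nonempty S := ⟨⟨p, h.1⟩⟩
  rw [← norm_eq_iInf_iff_real_inner_le_zero hS h.1]
  refine le_antisymm (le_ciInf fun z => ?_)
    (ciInf_le (f := fun z : S => ‖w - (z : E)‖) ⟨0, by rintro _ ⟨z, rfl⟩; positivity⟩ ⟨p, h.1⟩)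
  simpa only [dist_eq_norm] using h.2 z z.2

theorem IsProjOn.norm_sub_sq_le_of_mem (hS : Convex ℝ S) (hw : w ∈ S) {ω : ℝ} {v : E}
    (h : IsProjOn (w + ω • v) S p) : ‖p - w‖ ^ 2 ≤ ω * (⟪v, p⟫ - ⟪v, w⟫) := by
  have hvi := h.inner_sub_sub_nonpos hS w hw
  have expand : ⟪w + ω • v - p, w - p⟫ = ‖w - p‖ ^ 2 + ω * (⟪v, w⟫ - ⟪v, p⟫) := by
    rw [show w + ω • v - p = (w - p) + ω • v by abel, inner_add_left, real_inner_smul_left,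
      real_inner_self_eq_norm_sq, inner_sub_right]
  rw [norm_sub_rev]
  linarith

end Projection

section Lift

variable {n : ℕ}

theorem inner_pr (t t' : ℝ) (y y' : EuclideanSpace ℝ (Fin n)) :
    ⟪pr t y, pr t' y'⟫ = t * t' + ⟪y, y'⟫ := by
  simp [pr, PiLp.inner_apply, Fin.sum_univ_succ, RCLike.inner_apply, mul_comm]

theorem smul_pr (c t : ℝ) (y : EuclideanSpace ℝ (Fin n)) : c • pr t y = pr (c * t) (c • y) := by
  ext i
  refine Fin.cases ?_ (fun j => ?_) i <;> rfl

theorem pr_add (t t' : ℝ) (y y' : EuclideanSpace ℝ (Fin n)) :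
    pr t y + pr t' y' = pr (t + t') (y + y') := by
  ext i
  refine Fin.cases ?_ (fun j => ?_) i <;> rfl

theorem inner_cbaDirection_smul_pr {κ : ℝ} (hκ : κ ≠ 0) (f x y : EuclideanSpace ℝ (Fin n))
    (β : ℝ) : ⟪pr (⟪f, x⟫ / κ) (-f), β • pr κ y⟫ = β * (⟪f, x⟫ - ⟪f, y⟫) := by
  rw [real_inner_smul_right, inner_pr, div_mul_cancel₀ _ hκ, inner_neg_left, sub_eq_add_neg]

theorem mul_le_maxNorm_smul_pr {β κ : ℝ} (hβ : 0 ≤ β) (hκ : 0 ≤ κ)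
    (y : EuclideanSpace ℝ (Fin n)) : β * κ ≤ maxNorm (β • pr κ y) := by
  have hfirst : (β • pr κ y) 0 = β * κ := by rw [smul_pr]; rfl
  calc β * κ = |(β • pr κ y) 0| := by rw [hfirst, abs_of_nonneg (mul_nonneg hβ hκ)]
    _ ≤ maxNorm (β • pr κ y) := Finset.le_sup' (fun i => |(β • pr κ y) i|) (Finset.mem_univ 0)

theorem convex_coneLift {κ : ℝ} {X : Set (EuclideanSpace ℝ (Fin n))} (hX : Convex ℝ X) :
    Convex ℝ (coneLift κ X) := by
  rintro _ ⟨a, ha, x₁, hx₁, rfl⟩ _ ⟨b, hb, x₂, hx₂, rfl⟩ s t hs ht hst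
  have hsa : 0 ≤ s * a := mul_nonneg hs ha
  have htb : 0 ≤ t * b := mul_nonneg ht hb
  rcases (add_nonneg hsa htb).eq_or_lt with hγ | hγ
  · obtain ⟨hsa0, htb0⟩ := (add_eq_zero_iff_of_nonneg hsa htb).1 hγ.symm
    exact ⟨0, le_rfl, x₁, hx₁, by simp only [smul_smul, hsa0, htb0, zero_smul, add_zero]⟩
  · set γ := s * a + t * b
    refine ⟨γ, hγ.le, (s * a / γ) • x₁ + (t * b / γ) • x₂,
      hX hx₁ hx₂ (by positivity) (by positivity) (by rw [← add_div, div_self hγ.ne']), ?_⟩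
    simp only [smul_smul, smul_pr, pr_add, smul_add]
    congr 1
    · ring
    · rw [mul_div_cancel₀ _ hγ.ne', mul_div_cancel₀ _ hγ.ne']

end Lift

theorem stmt12_general {n : ℕ} (X : Set (EuclideanSpace ℝ (Fin n)))
    (hXcv : Convex ℝ X)
    (κ : ℝ) (hκpos : 0 < κ)
    (ω : ℝ) (hω : 0 < ω) (f : EuclideanSpace ℝ (Fin n))
    (x : EuclideanSpace ℝ (Fin n)) (hx : x ∈ X)
    (α : ℝ) (hα : 0 ≤ α)
    (u' u : EuclideanSpace ℝ (Fin (n + 1)))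
    (hu' : u' = α • pr κ x)
    (hu : IsProjOn (u' + ω • pr (⟪f, x⟫ / κ) (-f)) (coneLift κ X) u)
    (xp : EuclideanSpace ℝ (Fin n))
    (β : ℝ) (hβ : 0 < β) (huβ : u = β • pr κ xp) :
    ⟪f, xp⟫ ≤ ⟪f, x⟫ - κ / (ω * maxNorm u) * ‖u - u'‖ ^ 2 := by
  have hstep := hu.norm_sub_sq_le_of_mem (convex_coneLift hXcv) ⟨α, hα, x, hx, hu'⟩
  have hv_u' : ⟪pr (⟪f, x⟫ / κ) (-f), u'⟫ = 0 := by
    rw [hu', inner_cbaDirection_smul_pr hκpos.ne', sub_self, mul_zero]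
  have hv_u : ⟪pr (⟪f, x⟫ / κ) (-f), u⟫ = β * (⟪f, x⟫ - ⟪f, xp⟫) :=
    huβ ▸ inner_cbaDirection_smul_pr hκpos.ne' f x xp β
  rw [hv_u', hv_u, sub_zero] at hstep
  have hM : β * κ ≤ maxNorm u := huβ ▸ mul_le_maxNorm_smul_pr hβ.le hκpos.le xp
  have hMpos : 0 < maxNorm u := (mul_pos hβ hκpos).trans_le hM
  have hdecrease : 0 ≤ ⟪f, x⟫ - ⟪f, xp⟫ := by
    nlinarith [sq_nonneg ‖u - u'‖, mul_pos hω hβ]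
  have : κ / (ω * maxNorm u) * ‖u - u'‖ ^ 2 ≤ ⟪f, x⟫ - ⟪f, xp⟫ :=
    calc κ / (ω * maxNorm u) * ‖u - u'‖ ^ 2
        ≤ κ / (ω * maxNorm u) * (ω * (β * (⟪f, x⟫ - ⟪f, xp⟫))) := by gcongr
      _ = β * κ / maxNorm u * (⟪f, x⟫ - ⟪f, xp⟫) := by field_simp
      _ ≤ 1 * (⟪f, x⟫ - ⟪f, xp⟫) := by
          gcongr
          exact (div_le_one hMpos).2 hM
      _ = ⟪f, x⟫ - ⟪f, xp⟫ := one_mul _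
  linarith

/-- per-iteration claim of Theorem 6, part 1: under a CBA⁺ update
`u = π_C(u' + ω v)` with `u' = α • (κ, x)`, `v = (⟨f, x⟩/κ, −f)`, and
`u = β • (κ, x⁺)` with `β > 0`, one has
`⟨f, x⁺⟩ ≤ ⟨f, x⟩ − (κ/(ω ‖u‖_∞)) ‖u − u'‖₂²`. -/
theorem stmt12 {n : ℕ} (X : Set (EuclideanSpace ℝ (Fin n)))
    (hXne : X.Nonempty) (hXcv : Convex ℝ X) (hXcp : IsCompact X)
    (κ : ℝ) (hκ : IsGreatest ((fun x => ‖x‖) '' X) κ) (hκpos : 0 < κ)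
    (ω : ℝ) (hω : 0 < ω) (f : EuclideanSpace ℝ (Fin n))
    (x : EuclideanSpace ℝ (Fin n)) (hx : x ∈ X)
    (α : ℝ) (hα : 0 ≤ α)
    (u' u : EuclideanSpace ℝ (Fin (n + 1)))
    (hu' : u' = α • pr κ x)
    (hu : IsProjOn (u' + ω • pr (⟪f, x⟫ / κ) (-f)) (coneLift κ X) u)
    (hune : u ≠ 0)
    (xp : EuclideanSpace ℝ (Fin n)) (hxp : xp ∈ X)
    (β : ℝ) (hβ : 0 < β) (huβ : u = β • pr κ xp) :
    ⟪f, xp⟫ ≤ ⟪f, x⟫ - κ / (ω * maxNorm u) * ‖u - u'‖ ^ 2 :=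
  stmt12_general X hXcv κ hκpos ω hω f x hx α hα u' u hu' hu xp β hβ huβ

end
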